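/- arXiv:1401.4025 — 2 statements merged into one kernel-verified Lean document; each statement's English description precedes it below -/
import Mathlib

section
/- Let A be a nondeterministic parity tree automaton, t a tree, ρ a run of A on t, v a vertex, and ρ' an accepting run of A on a tree r with ρ'(ε) = ρ(v). If ρ is accepting (on t), then the substituted run ρ[ρ'/v] is an accepting run of A on t[r/v]. -/
open Filter Set

/-- An infinite binary tree over alphabet `A`. -/
abbrev Tree' (A : Type) := List Bool → A

/-- Subtree of `t` rooted at vertex `v`. -/
def subtreeAt {A : Type} (t : Tree' A) (v : List Bool) : Tree' A := fun w => t (v ++ w)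

/-- Substitution `t[r/v]`: replace the subtree of `t` at `v` by `r`. -/
def substAt {A : Type} (t r : Tree' A) (v : List Bool) : Tree' A :=
  fun w => if v <+: w then r (w.drop v.length) else t w

/-- A nondeterministic parity tree automaton. -/
structure NPA (Q A : Type) where
  q0 : Q
  Δ : Set (Q × Q × A × Q)
  Ω : Q → ℕ

/-- `ρ` is a run of `M` on `t`. `false` = left, `true` = right. -/
def NPA.IsRun {Q A : Type} (M : NPA Q A) (t : Tree' A) (ρ : Tree' Q) : Prop :=
  ∀ v : List Bool, (ρ v, ρ (v ++ [false]), t v, ρ (v ++ [true])) ∈ M.Δ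

/-- Length-`n` prefix of an infinite branch, as a vertex. -/
def pref (b : ℕ → Bool) (n : ℕ) : List Bool := (List.range n).map b

/-- `ρ` is an accepting run of `M` on `t`. -/
def NPA.Accepting {Q A : Type} (M : NPA Q A) (t : Tree' A) (ρ : Tree' Q) : Prop :=
  M.IsRun t ρ ∧
    ∀ b : ℕ → Bool, Even (Filter.limsup (fun n => M.Ω (ρ (pref b n))) Filter.atTop)

/-- Accepting run starting from state `q`. -/
def NPA.AcceptingFrom {Q A : Type} (M : NPA Q A) (q : Q) (t : Tree' A) (ρ : Tree' Q) : Prop :=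
  M.Accepting t ρ ∧ ρ [] = q

/-- The language recognised by `M`. -/
def NPA.Lang {Q A : Type} (M : NPA Q A) : Set (Tree' A) :=
  { t | ∃ ρ, M.AcceptingFrom M.q0 t ρ }

/-- `M` is unambiguous. -/
def NPA.Unambiguous {Q A : Type} (M : NPA Q A) : Prop :=
  ∀ (t : Tree' A) (ρ₁ ρ₂ : Tree' Q),
    M.AcceptingFrom M.q0 t ρ₁ → M.AcceptingFrom M.q0 t ρ₂ → ρ₁ = ρ₂

/-- `(q, a)` is productive. -/
def NPA.Productive {Q A : Type} (M : NPA Q A) (q : Q) (a : A) : Prop :=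
  ∃ (t : Tree' A) (ρ : Tree' Q) (v : List Bool),
    M.AcceptingFrom M.q0 t ρ ∧ ρ v = q ∧ t v = a

/-- The transition `δ` starts from the pair `(q, a)`. -/
def NPA.StartsFrom {Q A : Type} (M : NPA Q A) (δ : Q × Q × A × Q) (q : Q) (a : A) : Prop :=
  δ ∈ M.Δ ∧ δ.1 = q ∧ δ.2.2.1 = a

/-- `L_δ`: trees with an accepting run using transition `δ` at the root. -/
def NPA.Ldelta {Q A : Type} (M : NPA Q A) (δ : Q × Q × A × Q) : Set (Tree' A) :=
  { t | ∃ ρ : Tree' Q, M.Accepting t ρ ∧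
      ρ [] = δ.1 ∧ ρ [false] = δ.2.1 ∧ t [] = δ.2.2.1 ∧ ρ [true] = δ.2.2.2 }


lemma pref_succ (b : ℕ → Bool) (n : ℕ) : pref b (n + 1) = pref b n ++ [b n] := by
  simp [pref, List.range_succ]

lemma pref_length (b : ℕ → Bool) (n : ℕ) : (pref b n).length = n := by simp [pref]

lemma take_pref (b : ℕ → Bool) {k n : ℕ} (h : k ≤ n) : (pref b n).take k = pref b k := by
  simp [pref, ← List.map_take, List.take_range, Nat.min_eq_left h]

lemma pref_add (b : ℕ → Bool) (L m : ℕ) :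
    pref b (L + m) = pref b L ++ pref (fun k => b (k + L)) m := by
  induction m with
  | zero => simp [pref]
  | succ m ih =>
    rw [← Nat.add_assoc, pref_succ, ih, pref_succ, List.append_assoc]
    simp [Nat.add_comm]

lemma prefix_pref_iff (b : ℕ → Bool) {v : List Bool} {n : ℕ} (hn : v.length ≤ n) :
    v <+: pref b n ↔ pref b v.length = v := by
  rw [List.prefix_iff_eq_take, take_pref b hn, eq_comm]

section Substitution

variable {A : Type} (t r : Tree' A) {v w : List Bool}

lemma substAt_of_prefix (h : v <+: w) : substAt t r v w = r (w.drop v.length) := if_pos h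

lemma substAt_of_not_prefix (h : ¬ v <+: w) : substAt t r v w = t w := if_neg h

lemma substAt_append (v w : List Bool) : substAt t r v (v ++ w) = r w := by
  simp [substAt_of_prefix t r (List.prefix_append v w)]

lemma substAt_append_singleton_of_prefix (h : v <+: w) (c : Bool) :
    substAt t r v (w ++ [c]) = r (w.drop v.length ++ [c]) := by
  rw [substAt_of_prefix t r (h.trans (List.prefix_append _ _)),
    List.drop_append_of_le_length h.length_le]

lemma substAt_append_singleton_of_not_prefix (hroot : r [] = t v) (h : ¬ v <+: w)
    (c : Bool) : substAt t r v (w ++ [c]) = t (w ++ [c]) := by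
  by_cases hc : v <+: w ++ [c]
  · obtain rfl : v = w ++ [c] := (List.prefix_concat_iff.mp hc).resolve_right h
    simpa [hroot] using substAt_append t r (w ++ [c]) []
  · exact substAt_of_not_prefix t r hc

lemma substAt_pref_of_pref_eq {b : ℕ → Bool} (hb : pref b v.length = v) (n : ℕ) :
    substAt t r v (pref b (v.length + n)) = r (pref (fun k => b (k + v.length)) n) := by
  rw [pref_add, hb, substAt_append]

lemma substAt_pref_of_pref_ne {b : ℕ → Bool} (hb : pref b v.length ≠ v) (n : ℕ) :
    substAt t r v (pref b n) = t (pref b n) := by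
  refine substAt_of_not_prefix t r fun h => hb ?_
  have hn : v.length ≤ n := pref_length b n ▸ h.length_le
  exact (prefix_pref_iff b hn).mp h

end Substitution

/-- A branch through `v` sees only `ρ'` from depth `|v|` on; any other branch sees only `ρ`. -/
lemma limsup_substAt_pref {Q : Type} (Ω : Q → ℕ) (ρ ρ' : Tree' Q) (v : List Bool)
    (b : ℕ → Bool) :
    limsup (fun n => Ω (substAt ρ ρ' v (pref b n))) atTop
        = limsup (fun n => Ω (ρ (pref b n))) atTop ∨
      limsup (fun n => Ω (substAt ρ ρ' v (pref b n))) atTop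
        = limsup (fun n => Ω (ρ' (pref (fun k => b (k + v.length)) n))) atTop := by
  by_cases hb : pref b v.length = v
  · right
    rw [← limsup_nat_add _ v.length]
    simp only [Nat.add_comm _ v.length, substAt_pref_of_pref_eq ρ ρ' hb]
  · left
    simp only [substAt_pref_of_pref_ne ρ ρ' hb]

lemma NPA.IsRun.substAt {Q A : Type} {M : NPA Q A} {t r : Tree' A} {ρ ρ' : Tree' Q}
    {v : List Bool} (hρ : M.IsRun t ρ) (hρ' : M.IsRun r ρ') (hstart : ρ' [] = ρ v) :
    M.IsRun (substAt t r v) (substAt ρ ρ' v) := by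
  intro w
  by_cases hw : v <+: w
  · simp only [substAt_of_prefix _ _ hw, substAt_append_singleton_of_prefix _ _ hw]
    exact hρ' (w.drop v.length)
  · simp only [substAt_of_not_prefix _ _ hw,
      substAt_append_singleton_of_not_prefix _ _ hstart hw]
    exact hρ w

theorem stmt2 {Q A : Type} (M : NPA Q A) (t r : Tree' A) (ρ ρ' : Tree' Q) (v : List Bool)
    (hρ : M.Accepting t ρ) (hρ' : M.Accepting r ρ') (hstart : ρ' [] = ρ v) :
    M.Accepting (substAt t r v) (substAt ρ ρ' v) := by
  refine ⟨hρ.1.substAt hρ'.1 hstart, fun b => ?_⟩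
  rcases limsup_substAt_pref M.Ω ρ ρ' v b with h | h <;> rw [h]
  exacts [hρ.2 b, hρ'.2 _]
end

section
/- Define a partial run ρ of A on a tree t ∉ L(A) as follows: ρ(ε) = q₀; at a defined vertex v with q = ρ(v), a = t(v), if (q,a) is unproductive, v is a leaf; otherwise extend ρ to v·L and v·R using the unique transition δ starting from (q,a) with t↾_v ∈ C_δ, where the sets C_δ partition all trees among the transitions from (q,a). Then either ρ has a leaf (a vertex where (ρ(v), t(v)) is unproductive), or ρ is a total run of A on t and there exists an infinite branch b with limsup Ω(ρ(b↾_n)) odd. -/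
open Filter Set

/-!
The run is built top-down: at each vertex it follows the transition whose class `C δ` contains
the current subtree. If every pair it meets is productive, the classes always determine a
transition, so it is a total run; as `t ∉ L(A)` it is not accepting, hence some branch has odd
limsup.
-/

lemma subtreeAt_apply_nil {A : Type} (t : Tree' A) (v : List Bool) : subtreeAt t v [] = t v := by
  simp [subtreeAt]

def NPA.childState {Q A : Type} (δ : Q × Q × A × Q) : Bool → Q
  | false => δ.2.1
  | true => δ.2.2.2

open Classical in
/-- The transition from `(q, s [])` whose class `C δ` contains `s`, if there is one. -/
noncomputable def NPA.pick {Q A : Type} (M : NPA Q A) (C : Q × Q × A × Q → Set (Tree' A))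
    (q : Q) (s : Tree' A) : Q × Q × A × Q :=
  if h : ∃ δ, M.StartsFrom δ q (s []) ∧ s ∈ C δ then h.choose else (q, q, s [], q)

lemma NPA.pick_spec {Q A : Type} (M : NPA Q A) (C : Q × Q × A × Q → Set (Tree' A))
    {q : Q} {s : Tree' A} (h : ∃ δ, M.StartsFrom δ q (s []) ∧ s ∈ C δ) :
    M.StartsFrom (M.pick C q s) q (s []) ∧ s ∈ C (M.pick C q s) := by
  rw [NPA.pick, dif_pos h]
  exact h.choose_spec

/-- The run guided by `C`, indexed by reversed vertices so that each recursive step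
passes from a vertex to one of its children. -/
noncomputable def NPA.guidedRunRev {Q A : Type} (M : NPA Q A)
    (C : Q × Q × A × Q → Set (Tree' A)) (t : Tree' A) : List Bool → Q
  | [] => M.q0
  | b :: w => NPA.childState (M.pick C (M.guidedRunRev C t w) (subtreeAt t w.reverse)) b

noncomputable def NPA.guidedRun {Q A : Type} (M : NPA Q A)
    (C : Q × Q × A × Q → Set (Tree' A)) (t : Tree' A) : Tree' Q :=
  fun v => M.guidedRunRev C t v.reverse

section GuidedRun

variable {Q A : Type} (M : NPA Q A) (C : Q × Q × A × Q → Set (Tree' A)) (t : Tree' A)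

lemma NPA.guidedRun_nil : M.guidedRun C t [] = M.q0 := rfl

lemma NPA.guidedRun_append_singleton (v : List Bool) (b : Bool) :
    M.guidedRun C t (v ++ [b]) =
      NPA.childState (M.pick C (M.guidedRun C t v) (subtreeAt t v)) b := by
  simp [NPA.guidedRun, NPA.guidedRunRev]

lemma NPA.guidedRun_step (v : List Bool)
    (h : ∃ δ, M.StartsFrom δ (M.guidedRun C t v) (t v) ∧ subtreeAt t v ∈ C δ) :
    (M.guidedRun C t v, M.guidedRun C t (v ++ [false]), t v, M.guidedRun C t (v ++ [true]))
        ∈ M.Δ ∧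
      subtreeAt t v ∈ C (M.guidedRun C t v, M.guidedRun C t (v ++ [false]), t v,
        M.guidedRun C t (v ++ [true])) := by
  obtain ⟨⟨hΔ, hq, ha⟩, hC⟩ := M.pick_spec C (s := subtreeAt t v) (by rwa [subtreeAt_apply_nil])
  have heq : (M.guidedRun C t v, M.guidedRun C t (v ++ [false]), t v,
      M.guidedRun C t (v ++ [true])) = M.pick C (M.guidedRun C t v) (subtreeAt t v) := by
    simp only [NPA.guidedRun_append_singleton, NPA.childState, Prod.ext_iff]
    exact ⟨hq.symm, trivial, (subtreeAt_apply_nil t v ▸ ha).symm, trivial⟩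
  rw [heq]
  exact ⟨hΔ, hC⟩

end GuidedRun

lemma NPA.exists_odd_limsup_of_not_accepting {Q A : Type} (M : NPA Q A) {t : Tree' A}
    {ρ : Tree' Q} (hrun : M.IsRun t ρ) (hnacc : ¬ M.Accepting t ρ) :
    ∃ b : ℕ → Bool, Odd (Filter.limsup (fun n => M.Ω (ρ (pref b n))) Filter.atTop) := by
  simpa [NPA.Accepting, hrun, Nat.not_even_iff_odd] using hnacc

theorem stmt15_general {Q A : Type} (M : NPA Q A)
    (t : Tree' A) (ht : t ∉ M.Lang)
    (C : Q × Q × A × Q → Set (Tree' A))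
    (hCcover : ∀ (q : Q) (a : A), M.Productive q a →
      ∀ s : Tree' A, ∃ δ : Q × Q × A × Q, M.StartsFrom δ q a ∧ s ∈ C δ) :
    ∃ ρ : Tree' Q, ρ [] = M.q0 ∧
      (∀ v : List Bool, (∀ u : List Bool, u <+: v → M.Productive (ρ u) (t u)) →
        (ρ v, ρ (v ++ [false]), t v, ρ (v ++ [true])) ∈ M.Δ ∧
        subtreeAt t v ∈ C (ρ v, ρ (v ++ [false]), t v, ρ (v ++ [true]))) ∧
      ((∃ v : List Bool, ¬ M.Productive (ρ v) (t v)) ∨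
        (M.IsRun t ρ ∧
          ∃ b : ℕ → Bool,
            Odd (Filter.limsup (fun n => M.Ω (ρ (pref b n))) Filter.atTop))) := by
  set ρ := M.guidedRun C t
  have hstep : ∀ v, M.Productive (ρ v) (t v) →
      (ρ v, ρ (v ++ [false]), t v, ρ (v ++ [true])) ∈ M.Δ ∧
        subtreeAt t v ∈ C (ρ v, ρ (v ++ [false]), t v, ρ (v ++ [true])) :=
    fun v hv => M.guidedRun_step C t v (hCcover _ _ hv _)
  refine ⟨ρ, M.guidedRun_nil C t, fun v hv => hstep v (hv v List.prefix_rfl), ?_⟩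
  by_cases hall : ∀ v, M.Productive (ρ v) (t v)
  · have hrun : M.IsRun t ρ := fun v => (hstep v (hall v)).1
    exact Or.inr ⟨hrun, M.exists_odd_limsup_of_not_accepting hrun fun hacc => ht ⟨ρ, hacc, rfl⟩⟩
  · push Not at hall
    exact Or.inl hall

theorem stmt15 {Q A : Type} [Fintype Q] (M : NPA Q A) (hU : M.Unambiguous)
    (t : Tree' A) (ht : t ∉ M.Lang)
    (C : Q × Q × A × Q → Set (Tree' A))
    (hCdisj : ∀ (q : Q) (a : A), M.Productive q a →
      ∀ δ₁ δ₂ : Q × Q × A × Q, M.StartsFrom δ₁ q a → M.StartsFrom δ₂ q a → δ₁ ≠ δ₂ →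
        C δ₁ ∩ C δ₂ = ∅)
    (hCcover : ∀ (q : Q) (a : A), M.Productive q a →
      ∀ s : Tree' A, ∃ δ : Q × Q × A × Q, M.StartsFrom δ q a ∧ s ∈ C δ) :
    ∃ ρ : Tree' Q, ρ [] = M.q0 ∧
      (∀ v : List Bool, (∀ u : List Bool, u <+: v → M.Productive (ρ u) (t u)) →
        (ρ v, ρ (v ++ [false]), t v, ρ (v ++ [true])) ∈ M.Δ ∧
        subtreeAt t v ∈ C (ρ v, ρ (v ++ [false]), t v, ρ (v ++ [true]))) ∧
      ((∃ v : List Bool, ¬ M.Productive (ρ v) (t v)) ∨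
        (M.IsRun t ρ ∧
          ∃ b : ℕ → Bool,
            Odd (Filter.limsup (fun n => M.Ω (ρ (pref b n))) Filter.atTop))) :=
  stmt15_general M t ht C hCcover
end
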